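/- Let A be a line arrangement in ℝ². If χ = (P,Q) is a polynomial vector field of degree d (i.e., max(deg P, deg Q) = d) that fixes every line of A and whose set of invariant lines is finite, then d ≥ max{m(A)−1, p(A)}. In particular, the minimal degree d_f(A) of a polynomial vector field fixing A and fixing only finitely many lines satisfies d_f(A) ≥ ν_∞(A) = max{m(A)−1, p(A)}. -/

import Mathlib

open MvPolynomial

/-- Evaluation of a bivariate polynomial at a point of `ℝ × ℝ`
(the variable `X 0` is `x`, the variable `X 1` is `y`). -/
noncomputable def pev (P : MvPolynomial (Fin 2) ℝ) (q : ℝ × ℝ) : ℝ :=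
  MvPolynomial.eval ![q.1, q.2] P

/-- The line `{(x, y) | a * x + b * y + c = 0}`. -/
def lineSet (a b c : ℝ) : Set (ℝ × ℝ) := {q : ℝ × ℝ | a * q.1 + b * q.2 + c = 0}

/-- A subset of `ℝ²` is a line if it is the zero set of an affine form
`a * x + b * y + c` with `(a, b) ≠ (0, 0)`. -/
def IsLine (L : Set (ℝ × ℝ)) : Prop :=
  ∃ a b c : ℝ, (a, b) ≠ (0, 0) ∧ L = lineSet a b c

/-- The line `L` is invariant by the polynomial vector field `χ = P ∂x + Q ∂y`:
for a defining affine form `a * x + b * y + c` of `L`, the polynomial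
`a * P + b * Q` vanishes at every point of `L`. -/
def InvLine (P Q : MvPolynomial (Fin 2) ℝ) (L : Set (ℝ × ℝ)) : Prop :=
  ∃ a b c : ℝ, (a, b) ≠ (0, 0) ∧ L = lineSet a b c ∧
    ∀ q ∈ L, a * pev P q + b * pev Q q = 0

open scoped Classical in
/-- The number of lines of the arrangement `A` passing through the point `q`. -/
noncomputable def numThrough (A : Finset (Set (ℝ × ℝ))) (q : ℝ × ℝ) : ℕ :=
  (A.filter (fun L => q ∈ L)).card

/-- `mArr A` is the maximal number of lines of `A` passing through a common point. -/
noncomputable def mArr (A : Finset (Set (ℝ × ℝ))) : ℕ :=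
  sSup (Set.range (numThrough A))

/-- Two lines are parallel if they are equal or disjoint. -/
def ParLines (L L' : Set (ℝ × ℝ)) : Prop := L = L' ∨ L ∩ L' = ∅

/-- `pArr A` is the maximal number of pairwise parallel lines in `A`. -/
noncomputable def pArr (A : Finset (Set (ℝ × ℝ))) : ℕ :=
  sSup {k : ℕ | ∃ S : Finset (Set (ℝ × ℝ)), S ⊆ A ∧
    (∀ L ∈ S, ∀ L' ∈ S, ParLines L L') ∧ S.card = k}

open scoped Polynomial

/-!
Both bounds come from one counting principle. Take a family of lines `s ↦ L s` whose normal
`(a s, b s)` and base point `(x s, y s)` are polynomial in `s` of degree at most one. The normal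
component of `χ` at the point `(x s, y s) + τ • (-b s, a s)` is a polynomial `G_τ` in `s` of
degree at most `d + deg (a, b)`, and `L s` is invariant iff `G_τ(s) = 0` for every `τ`. If all
`G_τ` vanished, every `L s` would be invariant, against finiteness; so some `G_τ ≠ 0`, and the
invariant members of the family are among its roots.

Pairwise parallel lines lie in a family with constant normal, whence `p(A) ≤ d`. The lines through
a point `q` lie, apart from a single one, in the family with normals `(s, 1 + t s)`; choosing the
slope `t` so that the missing line is not in `A` gives `m(A) ≤ d + 1`.
-/

lemma card_le_of_mem_iff_forall_eval_eq_zero {K α ι : Type*} [CommRing K] [IsDomain K]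
    [Infinite K] {S : Set α} (hS : S.Finite) {L : K → α} (hL : Function.Injective L)
    {G : ι → K[X]} {n : ℕ} (hG : ∀ i, (G i).natDegree ≤ n)
    (hLS : ∀ s, L s ∈ S ↔ ∀ i, (G i).eval s = 0)
    {F : Finset α} (hF : ∀ M ∈ F, M ∈ S ∧ M ∈ Set.range L) : F.card ≤ n := by
  classical
  obtain ⟨i, hi⟩ : ∃ i, G i ≠ 0 := by
    by_contra! hzero
    refine Set.infinite_range_of_injective hL (hS.subset ?_)
    rintro _ ⟨s, rfl⟩
    exact (hLS s).2 fun i => by simp [hzero i]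
  have hsub : F ⊆ (G i).roots.toFinset.image L := by
    intro M hM
    obtain ⟨hMS, s, rfl⟩ := hF M hM
    exact Finset.mem_image_of_mem L
      (Multiset.mem_toFinset.2 ((Polynomial.mem_roots hi).2 ((hLS s).1 hMS i)))
  calc F.card ≤ ((G i).roots.toFinset.image L).card := Finset.card_le_card hsub
    _ ≤ (G i).roots.toFinset.card := Finset.card_image_le
    _ ≤ (G i).roots.card := Multiset.toFinset_card_le _
    _ ≤ (G i).natDegree := Polynomial.card_roots' _
    _ ≤ n := hG i

section LineGeometry

variable {a b c a' b' c' : ℝ}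

@[simp]
lemma mem_lineSet {r : ℝ × ℝ} : r ∈ lineSet a b c ↔ a * r.1 + b * r.2 + c = 0 := Iff.rfl

lemma sq_add_sq_ne_zero (hab : (a, b) ≠ (0, 0)) : a ^ 2 + b ^ 2 ≠ 0 := by
  rw [sq, sq]
  exact mt mul_self_add_mul_self_eq_zero.1 (by simpa [Prod.ext_iff] using hab)

lemma lineSet_mul_left {l : ℝ} (hl : l ≠ 0) :
    lineSet (l * a) (l * b) (l * c) = lineSet a b c := by
  ext r
  simp only [mem_lineSet]
  constructor
  · intro h
    exact (mul_eq_zero.1 (by linear_combination h)).resolve_left hl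
  · intro h
    linear_combination l * h

lemma exists_eq_mul_of_mul_eq_mul (hab : (a, b) ≠ (0, 0)) (h : a * b' = b * a') :
    ∃ l, a' = l * a ∧ b' = l * b := by
  have hn := sq_add_sq_ne_zero hab
  refine ⟨(a * a' + b * b') / (a ^ 2 + b ^ 2), ?_, ?_⟩ <;> field_simp
  · linear_combination (-b) * h
  · linear_combination a * h

lemma mem_lineSet_iff_exists_eq {p r : ℝ × ℝ} (hab : (a, b) ≠ (0, 0))
    (hp : p ∈ lineSet a b c) :
    r ∈ lineSet a b c ↔ ∃ τ : ℝ, r = (p.1 - τ * b, p.2 + τ * a) := by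
  simp only [mem_lineSet] at hp ⊢
  constructor
  · intro hr
    obtain ⟨τ, h1, h2⟩ := exists_eq_mul_of_mul_eq_mul hab
      (a' := r.2 - p.2) (b' := p.1 - r.1) (by linear_combination hp - hr)
    exact ⟨τ, Prod.ext (by linear_combination -h2) (by linear_combination h1)⟩
  · rintro ⟨τ, rfl⟩
    linear_combination hp

lemma lineSet_nonempty (hab : (a, b) ≠ (0, 0)) : (lineSet a b c).Nonempty := by
  have hn := sq_add_sq_ne_zero hab
  refine ⟨(-(c * a) / (a ^ 2 + b ^ 2), -(c * b) / (a ^ 2 + b ^ 2)), ?_⟩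
  simp only [mem_lineSet]
  field_simp
  ring

lemma lineSet_injective (hab : (a, b) ≠ (0, 0)) : Function.Injective (lineSet a b) := by
  intro c c' h
  obtain ⟨p, hp⟩ := lineSet_nonempty (c := c) hab
  have hp' : p ∈ lineSet a b c' := h ▸ hp
  simp only [mem_lineSet] at hp hp'
  linarith

lemma mul_eq_mul_of_lineSet_eq (hab : (a, b) ≠ (0, 0)) (h : lineSet a b c = lineSet a' b' c') :
    a * b' = b * a' := by
  obtain ⟨p, hp⟩ := lineSet_nonempty (c := c) hab
  have hq : (p.1 - b, p.2 + a) ∈ lineSet a b c :=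
    (mem_lineSet_iff_exists_eq hab hp).2 ⟨1, by simp⟩
  rw [h] at hp hq
  simp only [mem_lineSet] at hp hq
  linear_combination hq - hp

lemma lineSet_inter_nonempty (h : a * b' ≠ b * a') :
    (lineSet a b c ∩ lineSet a' b' c').Nonempty := by
  have hΔ : a * b' - b * a' ≠ 0 := sub_ne_zero.2 h
  have hΔ' : b' * a - a' * b ≠ 0 := by contrapose! hΔ; linarith
  refine ⟨((b * c' - b' * c) / (a * b' - b * a'), (a' * c - a * c') / (a * b' - b * a')),
    ?_, ?_⟩ <;>
  · simp only [mem_lineSet]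
    field_simp
    ring

lemma exists_lineSet_eq_of_parLines (hab : (a, b) ≠ (0, 0)) (hab' : (a', b') ≠ (0, 0))
    (h : ParLines (lineSet a' b' c') (lineSet a b c)) :
    ∃ c'', lineSet a' b' c' = lineSet a b c'' := by
  have hcross : a * b' = b * a' := by
    rcases h with heq | hdisj
    · exact mul_eq_mul_of_lineSet_eq hab heq.symm
    · by_contra hne
      exact (lineSet_inter_nonempty (c := c) (c' := c') hne).ne_empty (Set.inter_comm _ _ ▸ hdisj)
  obtain ⟨l, rfl, rfl⟩ := exists_eq_mul_of_mul_eq_mul hab hcross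
  have hl : l ≠ 0 := by rintro rfl; simp at hab'
  exact ⟨c' / l, by conv_rhs => rw [← lineSet_mul_left hl, mul_div_cancel₀ _ hl]⟩

end LineGeometry

section VectorField

variable {P Q : MvPolynomial (Fin 2) ℝ}

lemma invLine_lineSet_iff {a b c : ℝ} (hab : (a, b) ≠ (0, 0)) :
    InvLine P Q (lineSet a b c) ↔ ∀ r ∈ lineSet a b c, a * pev P r + b * pev Q r = 0 := by
  refine ⟨?_, fun h => ⟨a, b, c, hab, rfl, h⟩⟩
  rintro ⟨a', b', c', hab', heq, hinv⟩ r hr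
  obtain ⟨l, rfl, rfl⟩ := exists_eq_mul_of_mul_eq_mul hab (mul_eq_mul_of_lineSet_eq hab heq)
  have hl : l ≠ 0 := by rintro rfl; simp at hab'
  exact (mul_eq_zero.1 (by linear_combination hinv r (heq ▸ hr))).resolve_left hl

lemma eval_aeval_eq_eval {σ K : Type*} [CommRing K] (f : σ → K[X]) (p : MvPolynomial σ K)
    (s : K) :
    (aeval f p).eval s = MvPolynomial.eval (fun i => (f i).eval s) p := by
  simpa [Polynomial.coe_aeval_eq_eval, MvPolynomial.coe_aeval_eq_eval] using
    MvPolynomial.comp_aeval_apply (Polynomial.aeval s) (f := f) p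

-- The point `(x s, y s) + τ • (-b s, a s)`, on the line through `(x s, y s)` with normal
-- `(a s, b s)`.
noncomputable def linePoint (a b x y : ℝ[X]) (τ : ℝ) : Fin 2 → ℝ[X] :=
  ![x - Polynomial.C τ * b, y + Polynomial.C τ * a]

noncomputable def normalComponent (P Q : MvPolynomial (Fin 2) ℝ) (a b x y : ℝ[X]) (τ : ℝ) :
    ℝ[X] :=
  a * aeval (linePoint a b x y τ) P + b * aeval (linePoint a b x y τ) Q

lemma eval_normalComponent (a b x y : ℝ[X]) (τ s : ℝ) :
    (normalComponent P Q a b x y τ).eval s =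
      a.eval s * pev P (x.eval s - τ * b.eval s, y.eval s + τ * a.eval s) +
        b.eval s * pev Q (x.eval s - τ * b.eval s, y.eval s + τ * a.eval s) := by
  have hpt : (fun i => (linePoint a b x y τ i).eval s) =
      ![x.eval s - τ * b.eval s, y.eval s + τ * a.eval s] := by
    ext i; fin_cases i <;> simp [linePoint]
  simp only [normalComponent, Polynomial.eval_add, Polynomial.eval_mul, eval_aeval_eq_eval, hpt,
    pev]

lemma natDegree_linePoint_le {a b x y : ℝ[X]} (ha : a.natDegree ≤ 1) (hb : b.natDegree ≤ 1)
    (hx : x.natDegree ≤ 1) (hy : y.natDegree ≤ 1) (τ : ℝ) (i : Fin 2) :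
    (linePoint a b x y τ i).natDegree ≤ 1 := by
  fin_cases i
  · exact Polynomial.natDegree_sub_le_of_le hx ((Polynomial.natDegree_C_mul_le _ _).trans hb)
  · exact Polynomial.natDegree_add_le_of_degree_le hy
      ((Polynomial.natDegree_C_mul_le _ _).trans ha)

lemma natDegree_normalComponent_le {a b x y : ℝ[X]} {k d : ℕ} (ha : a.natDegree ≤ k)
    (hb : b.natDegree ≤ k) (hk : k ≤ 1) (hx : x.natDegree ≤ 1) (hy : y.natDegree ≤ 1)
    (hP : P.totalDegree ≤ d) (hQ : Q.totalDegree ≤ d) (τ : ℝ) :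
    (normalComponent P Q a b x y τ).natDegree ≤ k + d := by
  have hdeg : ∀ R : MvPolynomial (Fin 2) ℝ, R.totalDegree ≤ d →
      (aeval (linePoint a b x y τ) R).natDegree ≤ d := fun R hR =>
    (MvPolynomial.aeval_natDegree_le R hR _
      (natDegree_linePoint_le (ha.trans hk) (hb.trans hk) hx hy τ)).trans_eq (mul_one d)
  exact Polynomial.natDegree_add_le_of_degree_le
    (Polynomial.natDegree_mul_le_of_le ha (hdeg P hP))
    (Polynomial.natDegree_mul_le_of_le hb (hdeg Q hQ))

lemma InvLine.isLine {M : Set (ℝ × ℝ)} (h : InvLine P Q M) : IsLine M :=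
  let ⟨a, b, c, hab, hM, _⟩ := h
  ⟨a, b, c, hab, hM⟩

lemma card_invLine_le_of_family {a b x y : ℝ[X]} {k d : ℕ} (ha : a.natDegree ≤ k)
    (hb : b.natDegree ≤ k) (hk : k ≤ 1) (hx : x.natDegree ≤ 1) (hy : y.natDegree ≤ 1)
    (hP : P.totalDegree ≤ d) (hQ : Q.totalDegree ≤ d) {L : ℝ → Set (ℝ × ℝ)}
    (hab : ∀ s, (a.eval s, b.eval s) ≠ (0, 0))
    (hL : ∀ s, ∃ c, L s = lineSet (a.eval s) (b.eval s) c)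
    (hxy : ∀ s, (x.eval s, y.eval s) ∈ L s) (hinj : Function.Injective L)
    (hfin : {M | InvLine P Q M}.Finite) {F : Finset (Set (ℝ × ℝ))}
    (hF : ∀ M ∈ F, InvLine P Q M ∧ M ∈ Set.range L) : F.card ≤ k + d := by
  refine card_le_of_mem_iff_forall_eval_eq_zero hfin hinj
    (natDegree_normalComponent_le ha hb hk hx hy hP hQ) (fun s => ?_) hF
  obtain ⟨c, hc⟩ := hL s
  have hpts := fun r => mem_lineSet_iff_exists_eq (r := r) (hab s) (hc ▸ hxy s)
  simp only [Set.mem_ofPred_eq, hc, invLine_lineSet_iff (hab s), eval_normalComponent]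
  constructor
  · exact fun h τ => h _ ((hpts _).2 ⟨τ, rfl⟩)
  · rintro h r hr
    obtain ⟨τ, rfl⟩ := (hpts r).1 hr
    exact h τ

-- As `s` ranges over `ℝ`, these are all the lines through `q` but the one with normal `(1, t)`.
def pencilLine (q : ℝ × ℝ) (t s : ℝ) : Set (ℝ × ℝ) :=
  lineSet s (1 + t * s) (-(s * q.1 + (1 + t * s) * q.2))

lemma pencilLine_injective (q : ℝ × ℝ) (t : ℝ) : Function.Injective (pencilLine q t) := by
  intro s s' h
  have hs : (s, 1 + t * s) ≠ (0, 0) := by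
    simp only [ne_eq, Prod.mk.injEq, not_and]
    rintro rfl
    simp
  linear_combination mul_eq_mul_of_lineSet_eq hs h

lemma exists_forall_mem_range_pencilLine (q : ℝ × ℝ) {F : Finset (Set (ℝ × ℝ))}
    (hF : ∀ M ∈ F, IsLine M ∧ q ∈ M) :
    ∃ t, ∀ M ∈ F, M ∈ Set.range (pencilLine q t) := by
  classical
  choose! a b c hab hM using fun M hM => (hF M hM).1
  obtain ⟨t, ht⟩ := Infinite.exists_notMem_finset (F.image fun M => b M / a M)
  refine ⟨t, fun M hMF => ?_⟩
  have hne : b M - t * a M ≠ 0 := by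
    by_cases ha : a M = 0
    · simpa [ha] using hab M hMF
    · intro h0
      exact ht (Finset.mem_image.2 ⟨M, hMF, by field_simp; linarith⟩)
  have hq := hM M hMF ▸ (hF M hMF).2
  rw [mem_lineSet] at hq
  have hl : (b M - t * a M)⁻¹ * (b M - t * a M) = 1 := inv_mul_cancel₀ hne
  refine ⟨a M * (b M - t * a M)⁻¹, ?_⟩
  refine Eq.trans ?_ ((lineSet_mul_left (inv_ne_zero hne)).trans (hM M hMF).symm)
  rw [pencilLine]
  congr 1
  · ring
  · linear_combination -hl
  · linear_combination -(b M - t * a M)⁻¹ * hq + q.2 * hl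

lemma card_invLine_through_le {d : ℕ} (hP : P.totalDegree ≤ d) (hQ : Q.totalDegree ≤ d)
    (hfin : {M | InvLine P Q M}.Finite) (q : ℝ × ℝ) {F : Finset (Set (ℝ × ℝ))}
    (hF : ∀ M ∈ F, InvLine P Q M ∧ q ∈ M) : F.card ≤ 1 + d := by
  obtain ⟨t, ht⟩ := exists_forall_mem_range_pencilLine q fun M hM =>
    ⟨(hF M hM).1.isLine, (hF M hM).2⟩
  have hconst (r : ℝ) : (Polynomial.C r).natDegree ≤ 1 :=
    (Polynomial.natDegree_C r).trans_le zero_le_one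
  refine card_invLine_le_of_family (a := Polynomial.X) (b := 1 + Polynomial.C t * Polynomial.X)
    (x := Polynomial.C q.1) (y := Polynomial.C q.2) Polynomial.natDegree_X_le (by compute_degree)
    le_rfl (hconst _) (hconst _) hP hQ (fun s => ?_)
    (fun s => ⟨-(s * q.1 + (1 + t * s) * q.2), by simp [pencilLine]⟩) (fun s => ?_)
    (pencilLine_injective q t) hfin (fun M hM => ⟨(hF M hM).1, ht M hM⟩)
  · simp only [Polynomial.eval_X, Polynomial.eval_add, Polynomial.eval_one, Polynomial.eval_mul,
      Polynomial.eval_C, ne_eq, Prod.mk.injEq, not_and]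
    rintro rfl
    simp
  · simp only [Polynomial.eval_C, pencilLine, mem_lineSet]
    ring

lemma card_invLine_le_of_pairwise_parLines {d : ℕ} (hP : P.totalDegree ≤ d)
    (hQ : Q.totalDegree ≤ d) (hfin : {M | InvLine P Q M}.Finite) {F : Finset (Set (ℝ × ℝ))}
    (hF : ∀ M ∈ F, InvLine P Q M) (hpar : ∀ M ∈ F, ∀ M' ∈ F, ParLines M M') :
    F.card ≤ d := by
  obtain rfl | ⟨M₀, hM₀⟩ := F.eq_empty_or_nonempty
  · simp
  obtain ⟨a, b, c₀, hab, rfl, -⟩ := hF M₀ hM₀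
  have hrange : ∀ M ∈ F, M ∈ Set.range (lineSet a b) := by
    intro M hM
    obtain ⟨a', b', c', hab', rfl, -⟩ := hF M hM
    obtain ⟨c'', h⟩ := exists_lineSet_eq_of_parLines hab hab' (hpar _ hM _ hM₀)
    exact ⟨c'', h.symm⟩
  have hn := sq_add_sq_ne_zero hab
  have hfoot (s : ℝ) :
      (-(a / (a ^ 2 + b ^ 2)) * s, -(b / (a ^ 2 + b ^ 2)) * s) ∈ lineSet a b s := by
    rw [mem_lineSet]
    field_simp
    ring
  simpa using card_invLine_le_of_family (a := Polynomial.C a) (b := Polynomial.C b)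
    (x := Polynomial.C (-(a / (a ^ 2 + b ^ 2))) * Polynomial.X)
    (y := Polynomial.C (-(b / (a ^ 2 + b ^ 2))) * Polynomial.X)
    (Polynomial.natDegree_C a).le (Polynomial.natDegree_C b).le zero_le_one
    (by compute_degree) (by compute_degree) hP hQ (by simpa using hab) (fun s => ⟨s, by simp⟩)
    (by simpa using hfoot) (lineSet_injective hab) hfin (fun M hM => ⟨hF M hM, hrange M hM⟩)

end VectorField

theorem finite_type_degree_lower_bound_general
    (A : Finset (Set (ℝ × ℝ)))
    (P Q : MvPolynomial (Fin 2) ℝ) (d : ℕ)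
    (hdeg : max P.totalDegree Q.totalDegree = d)
    (hfix : ∀ L ∈ A, InvLine P Q L)
    (hfin : {M : Set (ℝ × ℝ) | InvLine P Q M}.Finite) :
    max (mArr A - 1) (pArr A) ≤ d := by
  classical
  have hP : P.totalDegree ≤ d := hdeg ▸ le_max_left _ _
  have hQ : Q.totalDegree ≤ d := hdeg ▸ le_max_right _ _
  have hm : mArr A ≤ 1 + d := csSup_le' <| by
    rintro _ ⟨q, rfl⟩
    exact card_invLine_through_le hP hQ hfin q fun L hL =>
      ⟨hfix L (Finset.mem_filter.1 hL).1, (Finset.mem_filter.1 hL).2⟩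
  have hp : pArr A ≤ d := csSup_le' <| by
    rintro _ ⟨S, hSA, hpar, rfl⟩
    exact card_invLine_le_of_pairwise_parLines hP hQ hfin (fun L hL => hfix L (hSA hL)) hpar
  omega

/-- **Corollary.** If `(P, Q)` is a polynomial vector field of degree `d` fixing
every line of the arrangement `A` and whose set of invariant lines is finite, then
`d ≥ max (m(A) - 1) (p(A))`; in particular the minimal degree `d_f(A)` of a
polynomial vector field fixing `A` and fixing only finitely many lines satisfies
`d_f(A) ≥ ν_∞(A) = max (m(A) - 1) (p(A))`. -/
theorem finite_type_degree_lower_bound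
    (A : Finset (Set (ℝ × ℝ))) (hA : ∀ L ∈ A, IsLine L)
    (P Q : MvPolynomial (Fin 2) ℝ) (d : ℕ)
    (hdeg : max P.totalDegree Q.totalDegree = d)
    (hfix : ∀ L ∈ A, InvLine P Q L)
    (hfin : {M : Set (ℝ × ℝ) | InvLine P Q M}.Finite) :
    max (mArr A - 1) (pArr A) ≤ d :=
  finite_type_degree_lower_bound_general A P Q d hdeg hfix hfin
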